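/- arXiv:math/0205285 — 2 statements merged into one kernel-verified Lean document; each statement's English description precedes it below -/
import Mathlib

section
/- Let A be a Hopf algebra over ℂ with bijective antipode S and let φ be a left integral on A. Define the Fourier transform F : A → A* by F(x) = φ(·x), and for b ∈ A* let λ(b) ∈ End(A) be λ(b)x = Σ b(S⁻¹(x₍₁₎))·x₍₂₎. Then the Fourier transform converts convolution operators into multiplication operators: for all b ∈ A* and x ∈ A, F(λ(b)x) = b ⋆ F(x), where ⋆ is the convolution product on A*; explicitly, φ(u·λ(b)x) = Σ b(u₍₁₎)·φ(u₍₂₎·x) for all u ∈ A. -/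
/-!
STATEMENT 13: Let A be a Hopf algebra over ℂ with bijective antipode S and let φ be a
left integral on A.  Define the Fourier transform F : A → A* by F(x)(u) = φ(u·x), and
for b ∈ A* let λ(b)x = Σ b(S⁻¹(x₍₁₎))·x₍₂₎.  Then F converts convolution operators into
multiplication operators: F(λ(b)x) = b ⋆ F(x) for all b ∈ A* and x ∈ A, i.e.
φ(u·λ(b)x) = Σ b(u₍₁₎)·φ(u₍₂₎·x) for all u ∈ A.
-/

open scoped TensorProduct

variable {A : Type*} [Semiring A] [HopfAlgebra ℂ A]

/-- A left integral on a Hopf algebra `A` over `ℂ`: a nonzero linear functional `φ` with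
`(id ⊗ φ)(Δ(a)) = φ(a)·1` for all `a`. -/
def IsLeftIntegral (φ : A →ₗ[ℂ] ℂ) : Prop :=
  φ ≠ 0 ∧ ∀ a : A, TensorProduct.rid ℂ A (φ.lTensor A (Coalgebra.comul (R := ℂ) a)) = φ a • 1

/-- The convolution product on the dual `A* = A →ₗ[ℂ] ℂ` of a coalgebra:
`(b ⋆ b')(u) = Σ b(u₍₁₎)·b'(u₍₂₎)`. -/
noncomputable def conv (b b' : A →ₗ[ℂ] ℂ) : A →ₗ[ℂ] ℂ :=
  LinearMap.mul' ℂ ℂ ∘ₗ TensorProduct.map b b' ∘ₗ Coalgebra.comul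

/-- The convolution operator `λ(b) : A → A`, `λ(b)x = Σ b(S⁻¹(x₍₁₎))·x₍₂₎`, where
`Sinv` is the (given) inverse of the antipode. -/
noncomputable def lam (Sinv : A →ₗ[ℂ] A) (b : A →ₗ[ℂ] ℂ) : A →ₗ[ℂ] A :=
  (TensorProduct.lid ℂ A).toLinearMap ∘ₗ (b ∘ₗ Sinv).rTensor A ∘ₗ Coalgebra.comul

section Aux

open Coalgebra HopfAlgebra LinearMap TensorProduct

local notation "𝒮" => HopfAlgebra.antipode (R := ℂ) (A := A)
local notation "ε" => Coalgebra.counit (R := ℂ) (A := A)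

noncomputable def mulRepr {a b : A} (r : Coalgebra.Repr ℂ a (A × A)) (s : Coalgebra.Repr ℂ b (A × A)) :
    Coalgebra.Repr ℂ (a * b) ((A × A) × (A × A)) where
  index := r.index ×ˢ s.index
  left := fun p => r.left p.1 * s.left p.2
  right := fun p => r.right p.1 * s.right p.2
  eq := by
    rw [Finset.sum_product, Bialgebra.comul_mul, ← r.eq, ← s.eq, Finset.sum_mul_sum]
    simp [Algebra.TensorProduct.tmul_mul_tmul]

lemma counit_smul_sum {a : A} (r : Coalgebra.Repr ℂ a (A × A)) :
    ∑ i ∈ r.index, ε (r.left i) • r.right i = a := by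
  have h := congrArg (TensorProduct.lid ℂ A) (Coalgebra.sum_counit_tmul_eq r)
  simp only [map_sum, TensorProduct.lid_tmul] at h
  simpa using h

lemma smul_counit_sum {a : A} (r : Coalgebra.Repr ℂ a (A × A)) :
    ∑ i ∈ r.index, ε (r.right i) • r.left i = a := by
  have h := congrArg (TensorProduct.rid ℂ A) (Coalgebra.sum_tmul_counit_eq r)
  simp only [map_sum, TensorProduct.rid_tmul] at h
  simpa using h

lemma antipode_one' : 𝒮 (1 : A) = 1 := by
  have h := mul_antipode_rTensor_comul_apply (R := ℂ) (1 : A)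
  simpa [Bialgebra.comul_one, Algebra.TensorProduct.one_def] using h

lemma antipode_algebraMap' (z : ℂ) : 𝒮 (algebraMap ℂ A z) = algebraMap ℂ A z := by
  rw [Algebra.algebraMap_eq_smul_one, map_smul, antipode_one']

lemma triple_apply {M : Type*} [AddCommMonoid M] [Module ℂ M]
    (T : A ⊗[ℂ] (A ⊗[ℂ] A) →ₗ[ℂ] M) {a : A} (r : Coalgebra.Repr ℂ a (A × A))
    (r1 : (i : r.ι) → Coalgebra.Repr ℂ (r.left i) (A × A))
    (r2 : (i : r.ι) → Coalgebra.Repr ℂ (r.right i) (A × A)) :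
    ∑ i ∈ r.index, ∑ k ∈ (r2 i).index,
      T (r.left i ⊗ₜ[ℂ] ((r2 i).left k ⊗ₜ[ℂ] (r2 i).right k))
    = ∑ i ∈ r.index, ∑ k ∈ (r1 i).index,
      T ((r1 i).left k ⊗ₜ[ℂ] ((r1 i).right k ⊗ₜ[ℂ] r.right i)) := by
  have h := congrArg T (Coalgebra.sum_tmul_tmul_eq r r1 r2)
  simp only [map_sum] at h
  exact h.symm

lemma sum_mul_antipode_smul {a : A} (r : Coalgebra.Repr ℂ a (A × A)) (w : A) :
    ∑ i ∈ r.index, r.left i * (𝒮 (r.right i) * w) = ε a • w := by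
  calc ∑ i ∈ r.index, r.left i * (𝒮 (r.right i) * w)
      = (∑ i ∈ r.index, r.left i * 𝒮 (r.right i)) * w := by
        rw [Finset.sum_mul]; simp only [mul_assoc]
    _ = algebraMap ℂ A (ε a) * w := by rw [HopfAlgebra.sum_mul_antipode_eq_algebraMap_counit]
    _ = ε a • w := by rw [← Algebra.smul_def]

lemma sum_antipode_mul_smul {ι : Type*} {a : A} (r : Coalgebra.Repr ℂ a ι) (w : A) :
    ∑ i ∈ r.index, 𝒮 (r.left i) * (r.right i * w) = ε a • w := by
  calc ∑ i ∈ r.index, 𝒮 (r.left i) * (r.right i * w)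
      = (∑ i ∈ r.index, 𝒮 (r.left i) * r.right i) * w := by
        rw [Finset.sum_mul]; simp only [mul_assoc]
    _ = algebraMap ℂ A (ε a) * w := by rw [HopfAlgebra.sum_antipode_mul_eq_algebraMap_counit]
    _ = ε a • w := by rw [← Algebra.smul_def]

/-- the value `f p * (g q * h r)` trilinear map -/
noncomputable def triMul (f g h : A →ₗ[ℂ] A) : A ⊗[ℂ] (A ⊗[ℂ] A) →ₗ[ℂ] A :=
  LinearMap.mul' ℂ A ∘ₗ TensorProduct.map f (LinearMap.mul' ℂ A ∘ₗ TensorProduct.map g h)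

@[simp] lemma triMul_tmul (f g h : A →ₗ[ℂ] A) (p q r : A) :
    triMul f g h (p ⊗ₜ[ℂ] (q ⊗ₜ[ℂ] r)) = f p * (g q * h r) := by
  simp [triMul]

lemma sum4_swap {ι₁ ι₃ M : Type*} {κ : ι₁ → Type*} {lam : ι₃ → Type*} [AddCommMonoid M]
    (s1 : Finset ι₁) (s2 : (i : ι₁) → Finset (κ i))
    (s3 : Finset ι₃) (s4 : (j : ι₃) → Finset (lam j))
    (f : (i : ι₁) → κ i → (j : ι₃) → lam j → M) :
    ∑ i ∈ s1, ∑ k ∈ s2 i, ∑ j ∈ s3, ∑ l ∈ s4 j, f i k j l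
    = ∑ j ∈ s3, ∑ l ∈ s4 j, ∑ i ∈ s1, ∑ k ∈ s2 i, f i k j l := by
  calc ∑ i ∈ s1, ∑ k ∈ s2 i, ∑ j ∈ s3, ∑ l ∈ s4 j, f i k j l
      = ∑ i ∈ s1, ∑ j ∈ s3, ∑ k ∈ s2 i, ∑ l ∈ s4 j, f i k j l :=
        Finset.sum_congr rfl fun i _ => Finset.sum_comm
    _ = ∑ j ∈ s3, ∑ i ∈ s1, ∑ k ∈ s2 i, ∑ l ∈ s4 j, f i k j l := Finset.sum_comm
    _ = ∑ j ∈ s3, ∑ i ∈ s1, ∑ l ∈ s4 j, ∑ k ∈ s2 i, f i k j l :=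
        Finset.sum_congr rfl fun j _ => Finset.sum_congr rfl fun i _ => Finset.sum_comm
    _ = ∑ j ∈ s3, ∑ l ∈ s4 j, ∑ i ∈ s1, ∑ k ∈ s2 i, f i k j l :=
        Finset.sum_congr rfl fun j _ => Finset.sum_comm
lemma collapse_right {a : A} (r : Coalgebra.Repr ℂ a (A × A)) (c : A) :
    ∑ i ∈ r.index, ε (r.right i) • 𝒮 (r.left i * c) = 𝒮 (a * c) := by
  have h : ∀ i, ε (r.right i) • 𝒮 (r.left i * c) = 𝒮 ((ε (r.right i) • r.left i) * c) := by
    intro i; rw [smul_mul_assoc, map_smul]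
  rw [Finset.sum_congr rfl fun i _ => h i, ← map_sum, ← Finset.sum_mul, smul_counit_sum]

lemma collapse_left {a : A} (r : Coalgebra.Repr ℂ a (A × A)) (c : A) :
    ∑ i ∈ r.index, ε (r.right i) • 𝒮 (c * r.left i) = 𝒮 (c * a) := by
  have h : ∀ i, ε (r.right i) • 𝒮 (c * r.left i) = 𝒮 (c * (ε (r.right i) • r.left i)) := by
    intro i; rw [mul_smul_comm, map_smul]
  rw [Finset.sum_congr rfl fun i _ => h i, ← map_sum, ← Finset.mul_sum, smul_counit_sum]

lemma collapse_plain {a : A} (r : Coalgebra.Repr ℂ a (A × A)) :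
    ∑ i ∈ r.index, ε (r.left i) • 𝒮 (r.right i) = 𝒮 a := by
  rw [Finset.sum_congr rfl fun i _ => (map_smul 𝒮 _ _).symm, ← map_sum, counit_smul_sum]

lemma integral_sum {φ : A →ₗ[ℂ] ℂ}
    (hφ : ∀ a : A, TensorProduct.rid ℂ A (φ.lTensor A (Coalgebra.comul (R := ℂ) a)) = φ a • 1)
    {ι : Type*} {a : A} (r : Coalgebra.Repr ℂ a ι) :
    ∑ i ∈ r.index, φ (r.right i) • r.left i = φ a • 1 := by
  have h := hφ a
  rw [← r.eq] at h
  simpa [map_sum] using h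

noncomputable def Phi (w₁ w₂ : A) (ψ : A →ₗ[ℂ] ℂ) (Si : A →ₗ[ℂ] A) :
    A ⊗[ℂ] (A ⊗[ℂ] A) →ₗ[ℂ] A :=
  LinearMap.mul' ℂ A ∘ₗ (TensorProduct.comm ℂ A A).toLinearMap ∘ₗ
    TensorProduct.map Si ((TensorProduct.rid ℂ A).toLinearMap ∘ₗ
      TensorProduct.map (mulLeft ℂ w₁) (ψ ∘ₗ mulLeft ℂ w₂))

@[simp] lemma Phi_tmul (w₁ w₂ : A) (ψ : A →ₗ[ℂ] ℂ) (Si : A →ₗ[ℂ] A) (p q r : A) :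
    Phi w₁ w₂ ψ Si (p ⊗ₜ[ℂ] (q ⊗ₜ[ℂ] r)) = ψ (w₂ * r) • (w₁ * q * Si p) := by
  simp [Phi, smul_mul_assoc]

theorem comp2test (x y : A) (rx : Coalgebra.Repr ℂ x (A × A)) (ry : Coalgebra.Repr ℂ y (A × A))
    (rx2 : (i : rx.ι) → Coalgebra.Repr ℂ (rx.right i) (A × A))
    (ry2 : (j : ry.ι) → Coalgebra.Repr ℂ (ry.right j) (A × A)) :
    (∑ i ∈ rx.index, ∑ k ∈ (rx2 i).index, ∑ j ∈ ry.index, ∑ l ∈ (ry2 j).index,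
        𝒮 (rx.left i * ry.left j) *
          ((rx2 i).left k * ((ry2 j).left l *
            (𝒮 ((ry2 j).right l) * 𝒮 ((rx2 i).right k)))))
      = 𝒮 (x * y) := by
  calc
    ∑ i ∈ rx.index, ∑ k ∈ (rx2 i).index, ∑ j ∈ ry.index, ∑ l ∈ (ry2 j).index,
        𝒮 (rx.left i * ry.left j) *
          ((rx2 i).left k * ((ry2 j).left l *
            (𝒮 ((ry2 j).right l) * 𝒮 ((rx2 i).right k))))
      = ∑ i ∈ rx.index, ∑ k ∈ (rx2 i).index, ∑ j ∈ ry.index,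
          ε (ry.right j) • (𝒮 (rx.left i * ry.left j) *
            ((rx2 i).left k * 𝒮 ((rx2 i).right k))) := by
        refine Finset.sum_congr rfl fun i _ => Finset.sum_congr rfl fun k _ =>
          Finset.sum_congr rfl fun j _ => ?_
        rw [← Finset.mul_sum, ← Finset.mul_sum, sum_mul_antipode_smul (ry2 j),
          mul_smul_comm, mul_smul_comm]
    _ = ∑ i ∈ rx.index, ∑ k ∈ (rx2 i).index,
          𝒮 (rx.left i * y) * ((rx2 i).left k * 𝒮 ((rx2 i).right k)) := by
        refine Finset.sum_congr rfl fun i _ => Finset.sum_congr rfl fun k _ => ?_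
        have : ∀ j ∈ ry.index, ε (ry.right j) • (𝒮 (rx.left i * ry.left j) *
            ((rx2 i).left k * 𝒮 ((rx2 i).right k)))
            = (ε (ry.right j) • 𝒮 (rx.left i * ry.left j)) *
              ((rx2 i).left k * 𝒮 ((rx2 i).right k)) := by
          intro j _; rw [smul_mul_assoc]
        rw [Finset.sum_congr rfl this, ← Finset.sum_mul, collapse_left ry (rx.left i)]
    _ = ∑ i ∈ rx.index, ε (rx.right i) • 𝒮 (rx.left i * y) := by
        refine Finset.sum_congr rfl fun i _ => ?_
        rw [← Finset.mul_sum, HopfAlgebra.sum_mul_antipode_eq_algebraMap_counit (rx2 i),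
          ← Algebra.commutes, ← Algebra.smul_def]
    _ = 𝒮 (x * y) := collapse_right rx y
theorem comp1test (x y : A) (rx : Coalgebra.Repr ℂ x (A × A)) (ry : Coalgebra.Repr ℂ y (A × A))
    (rx1 : (i : rx.ι) → Coalgebra.Repr ℂ (rx.left i) (A × A))
    (rx2 : (i : rx.ι) → Coalgebra.Repr ℂ (rx.right i) (A × A))
    (ry1 : (j : ry.ι) → Coalgebra.Repr ℂ (ry.left j) (A × A))
    (ry2 : (j : ry.ι) → Coalgebra.Repr ℂ (ry.right j) (A × A)) :
    (∑ i ∈ rx.index, ∑ k ∈ (rx2 i).index, ∑ j ∈ ry.index, ∑ l ∈ (ry2 j).index,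
        𝒮 (rx.left i * ry.left j) *
          ((rx2 i).left k * ((ry2 j).left l *
            (𝒮 ((ry2 j).right l) * 𝒮 ((rx2 i).right k)))))
      = 𝒮 y * 𝒮 x := by
  calc
    ∑ i ∈ rx.index, ∑ k ∈ (rx2 i).index, ∑ j ∈ ry.index, ∑ l ∈ (ry2 j).index,
        𝒮 (rx.left i * ry.left j) *
          ((rx2 i).left k * ((ry2 j).left l *
            (𝒮 ((ry2 j).right l) * 𝒮 ((rx2 i).right k))))
      = ∑ j ∈ ry.index, ∑ l ∈ (ry2 j).index, ∑ i ∈ rx.index, ∑ k ∈ (rx2 i).index,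
          triMul (𝒮 ∘ₗ mulRight ℂ (ry.left j)) LinearMap.id
            (mulLeft ℂ ((ry2 j).left l) ∘ₗ mulLeft ℂ (𝒮 ((ry2 j).right l)) ∘ₗ 𝒮)
            (rx.left i ⊗ₜ[ℂ] ((rx2 i).left k ⊗ₜ[ℂ] (rx2 i).right k)) := by
        rw [show (∑ i ∈ rx.index, ∑ k ∈ (rx2 i).index, ∑ j ∈ ry.index, ∑ l ∈ (ry2 j).index,
            𝒮 (rx.left i * ry.left j) *
              ((rx2 i).left k * ((ry2 j).left l *
                (𝒮 ((ry2 j).right l) * 𝒮 ((rx2 i).right k)))))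
          = ∑ j ∈ ry.index, ∑ l ∈ (ry2 j).index, ∑ i ∈ rx.index, ∑ k ∈ (rx2 i).index,
            𝒮 (rx.left i * ry.left j) *
              ((rx2 i).left k * ((ry2 j).left l *
                (𝒮 ((ry2 j).right l) * 𝒮 ((rx2 i).right k))))
          from sum4_swap rx.index (fun i => (rx2 i).index) ry.index (fun j => (ry2 j).index)
            (fun i k j l => 𝒮 (rx.left i * ry.left j) *
              ((rx2 i).left k * ((ry2 j).left l *
                (𝒮 ((ry2 j).right l) * 𝒮 ((rx2 i).right k)))))]
        refine Finset.sum_congr rfl fun j _ => Finset.sum_congr rfl fun l _ =>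
          Finset.sum_congr rfl fun i _ => Finset.sum_congr rfl fun k _ => ?_
        simp [mul_assoc]
    _ = ∑ j ∈ ry.index, ∑ l ∈ (ry2 j).index, ∑ i ∈ rx.index, ∑ k ∈ (rx1 i).index,
          triMul (𝒮 ∘ₗ mulRight ℂ (ry.left j)) LinearMap.id
            (mulLeft ℂ ((ry2 j).left l) ∘ₗ mulLeft ℂ (𝒮 ((ry2 j).right l)) ∘ₗ 𝒮)
            ((rx1 i).left k ⊗ₜ[ℂ] ((rx1 i).right k ⊗ₜ[ℂ] rx.right i)) := by
        refine Finset.sum_congr rfl fun j _ => Finset.sum_congr rfl fun l _ => ?_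
        exact triple_apply _ rx rx1 rx2
    _ = ∑ i ∈ rx.index, ∑ k ∈ (rx1 i).index, ∑ j ∈ ry.index, ∑ l ∈ (ry2 j).index,
          triMul (𝒮 ∘ₗ mulLeft ℂ ((rx1 i).left k)) (mulLeft ℂ ((rx1 i).right k))
            (mulRight ℂ (𝒮 (rx.right i)) ∘ₗ 𝒮)
            (ry.left j ⊗ₜ[ℂ] ((ry2 j).left l ⊗ₜ[ℂ] (ry2 j).right l)) := by
        rw [show (∑ j ∈ ry.index, ∑ l ∈ (ry2 j).index, ∑ i ∈ rx.index, ∑ k ∈ (rx1 i).index,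
            triMul (𝒮 ∘ₗ mulRight ℂ (ry.left j)) LinearMap.id
              (mulLeft ℂ ((ry2 j).left l) ∘ₗ mulLeft ℂ (𝒮 ((ry2 j).right l)) ∘ₗ 𝒮)
              ((rx1 i).left k ⊗ₜ[ℂ] ((rx1 i).right k ⊗ₜ[ℂ] rx.right i)))
          = ∑ i ∈ rx.index, ∑ k ∈ (rx1 i).index, ∑ j ∈ ry.index, ∑ l ∈ (ry2 j).index,
            triMul (𝒮 ∘ₗ mulRight ℂ (ry.left j)) LinearMap.id
              (mulLeft ℂ ((ry2 j).left l) ∘ₗ mulLeft ℂ (𝒮 ((ry2 j).right l)) ∘ₗ 𝒮)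
              ((rx1 i).left k ⊗ₜ[ℂ] ((rx1 i).right k ⊗ₜ[ℂ] rx.right i))
          from sum4_swap ry.index (fun j => (ry2 j).index) rx.index (fun i => (rx1 i).index)
            (fun j l i k => triMul (𝒮 ∘ₗ mulRight ℂ (ry.left j)) LinearMap.id
              (mulLeft ℂ ((ry2 j).left l) ∘ₗ mulLeft ℂ (𝒮 ((ry2 j).right l)) ∘ₗ 𝒮)
              ((rx1 i).left k ⊗ₜ[ℂ] ((rx1 i).right k ⊗ₜ[ℂ] rx.right i)))]
        refine Finset.sum_congr rfl fun i _ => Finset.sum_congr rfl fun k _ =>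
          Finset.sum_congr rfl fun j _ => Finset.sum_congr rfl fun l _ => ?_
        simp [mul_assoc]
    _ = ∑ i ∈ rx.index, ∑ k ∈ (rx1 i).index, ∑ j ∈ ry.index, ∑ l ∈ (ry1 j).index,
          triMul (𝒮 ∘ₗ mulLeft ℂ ((rx1 i).left k)) (mulLeft ℂ ((rx1 i).right k))
            (mulRight ℂ (𝒮 (rx.right i)) ∘ₗ 𝒮)
            ((ry1 j).left l ⊗ₜ[ℂ] ((ry1 j).right l ⊗ₜ[ℂ] ry.right j)) := by
        refine Finset.sum_congr rfl fun i _ => Finset.sum_congr rfl fun k _ => ?_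
        exact triple_apply _ ry ry1 ry2
    _ = ∑ i ∈ rx.index, ∑ j ∈ ry.index, ∑ k ∈ (rx1 i).index, ∑ l ∈ (ry1 j).index,
          𝒮 ((rx1 i).left k * (ry1 j).left l) *
            (((rx1 i).right k * (ry1 j).right l) *
              (𝒮 (ry.right j) * 𝒮 (rx.right i))) := by
        refine Finset.sum_congr rfl fun i _ => ?_
        rw [Finset.sum_comm]
        refine Finset.sum_congr rfl fun j _ => Finset.sum_congr rfl fun k _ =>
          Finset.sum_congr rfl fun l _ => ?_
        simp [mul_assoc]
    _ = ∑ i ∈ rx.index, ∑ j ∈ ry.index,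
          (ε (rx.left i) * ε (ry.left j)) • (𝒮 (ry.right j) * 𝒮 (rx.right i)) := by
        refine Finset.sum_congr rfl fun i _ => Finset.sum_congr rfl fun j _ => ?_
        rw [← Finset.sum_product']
        have := sum_antipode_mul_smul (mulRepr (rx1 i) (ry1 j))
          (𝒮 (ry.right j) * 𝒮 (rx.right i))
        simp only [mulRepr] at this
        rw [this, Bialgebra.counit_mul]
    _ = 𝒮 y * 𝒮 x := by
        have step : ∀ i ∈ rx.index,
            ∑ j ∈ ry.index, (ε (rx.left i) * ε (ry.left j)) •
              (𝒮 (ry.right j) * 𝒮 (rx.right i))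
            = ε (rx.left i) • (𝒮 y * 𝒮 (rx.right i)) := by
          intro i _
          have h1 : ∀ j, (ε (rx.left i) * ε (ry.left j)) •
              (𝒮 (ry.right j) * 𝒮 (rx.right i))
              = ε (rx.left i) • ((ε (ry.left j) • 𝒮 (ry.right j)) * 𝒮 (rx.right i)) := by
            intro j; rw [mul_smul, smul_mul_assoc]
          rw [Finset.sum_congr rfl fun j _ => h1 j, ← Finset.smul_sum, ← Finset.sum_mul,
            collapse_plain ry]
        rw [Finset.sum_congr rfl step]
        have h2 : ∀ i, ε (rx.left i) • (𝒮 y * 𝒮 (rx.right i))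
            = 𝒮 y * (ε (rx.left i) • 𝒮 (rx.right i)) := by
          intro i; rw [mul_smul_comm]
        rw [Finset.sum_congr rfl fun i _ => h2 i, ← Finset.mul_sum, collapse_plain rx]
theorem antipode_mul' (x y : A) : 𝒮 (x * y) = 𝒮 y * 𝒮 x :=
  (comp2test x y (Coalgebra.Repr.arbitrary ℂ x) (Coalgebra.Repr.arbitrary ℂ y)
      (fun _ => Coalgebra.Repr.arbitrary ℂ _) (fun _ => Coalgebra.Repr.arbitrary ℂ _)).symm.trans
    (comp1test x y (Coalgebra.Repr.arbitrary ℂ x) (Coalgebra.Repr.arbitrary ℂ y)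
      (fun _ => Coalgebra.Repr.arbitrary ℂ _) (fun _ => Coalgebra.Repr.arbitrary ℂ _)
      (fun _ => Coalgebra.Repr.arbitrary ℂ _) (fun _ => Coalgebra.Repr.arbitrary ℂ _))

lemma sinv_sum (Sinv : A →ₗ[ℂ] A)
    (hS₁ : (HopfAlgebra.antipode (R := ℂ) (A := A)) ∘ₗ Sinv = LinearMap.id)
    (hS₂ : Sinv ∘ₗ (HopfAlgebra.antipode (R := ℂ) (A := A)) = LinearMap.id)
    {a : A} (r : Coalgebra.Repr ℂ a (A × A)) :
    ∑ i ∈ r.index, r.right i * Sinv (r.left i) = algebraMap ℂ A (ε a) := by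
  have hinj : Function.Injective (𝒮 : A → A) := by
    intro p q h
    have hp := LinearMap.congr_fun hS₂ p
    have hq := LinearMap.congr_fun hS₂ q
    simp only [LinearMap.comp_apply, LinearMap.id_apply] at hp hq
    rw [← hp, ← hq, h]
  apply hinj
  rw [map_sum, antipode_algebraMap']
  calc ∑ i ∈ r.index, 𝒮 (r.right i * Sinv (r.left i))
      = ∑ i ∈ r.index, r.left i * 𝒮 (r.right i) := by
        refine Finset.sum_congr rfl fun i _ => ?_
        have h1 : 𝒮 (Sinv (r.left i)) = r.left i := by
          have := LinearMap.congr_fun hS₁ (r.left i)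
          simpa using this
        rw [antipode_mul', h1]
    _ = algebraMap ℂ A (ε a) := HopfAlgebra.sum_mul_antipode_eq_algebraMap_counit r

lemma key_identity (Sinv : A →ₗ[ℂ] A)
    (hS₁ : (HopfAlgebra.antipode (R := ℂ) (A := A)) ∘ₗ Sinv = LinearMap.id)
    (hS₂ : Sinv ∘ₗ (HopfAlgebra.antipode (R := ℂ) (A := A)) = LinearMap.id)
    (φ : A →ₗ[ℂ] ℂ)
    (hφ : ∀ a : A, TensorProduct.rid ℂ A (φ.lTensor A (Coalgebra.comul (R := ℂ) a)) = φ a • 1)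
    (u x : A) (ru : Coalgebra.Repr ℂ u (A × A)) (rx : Coalgebra.Repr ℂ x (A × A))
    (rx1 : (i : rx.ι) → Coalgebra.Repr ℂ (rx.left i) (A × A))
    (rx2 : (i : rx.ι) → Coalgebra.Repr ℂ (rx.right i) (A × A)) :
    ∑ j ∈ ru.index, φ (ru.right j * x) • ru.left j
    = ∑ i ∈ rx.index, φ (u * rx.right i) • Sinv (rx.left i) := by
  calc ∑ j ∈ ru.index, φ (ru.right j * x) • ru.left j
      = ∑ j ∈ ru.index, ∑ i ∈ rx.index,
          (ε (rx.left i) * φ (ru.right j * rx.right i)) • ru.left j := by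
        refine Finset.sum_congr rfl fun j _ => ?_
        conv_lhs => rw [← counit_smul_sum rx]
        rw [Finset.mul_sum, map_sum, Finset.sum_smul]
        refine Finset.sum_congr rfl fun i _ => ?_
        rw [mul_smul_comm, map_smul, smul_eq_mul]
    _ = ∑ j ∈ ru.index, ∑ i ∈ rx.index, ∑ k ∈ (rx1 i).index,
          φ (ru.right j * rx.right i) •
            (ru.left j * ((rx1 i).right k * Sinv ((rx1 i).left k))) := by
        refine Finset.sum_congr rfl fun j _ => Finset.sum_congr rfl fun i _ => ?_
        have h1 : ε (rx.left i) • ru.left j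
            = ru.left j * algebraMap ℂ A (ε (rx.left i)) := by
          rw [Algebra.smul_def, Algebra.commutes]
        rw [mul_comm, mul_smul, h1, ← sinv_sum Sinv hS₁ hS₂ (rx1 i), Finset.mul_sum,
          Finset.smul_sum]
    _ = ∑ j ∈ ru.index, ∑ i ∈ rx.index, ∑ k ∈ (rx1 i).index,
          Phi (ru.left j) (ru.right j) φ Sinv
            ((rx1 i).left k ⊗ₜ[ℂ] ((rx1 i).right k ⊗ₜ[ℂ] rx.right i)) := by
        refine Finset.sum_congr rfl fun j _ => Finset.sum_congr rfl fun i _ =>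
          Finset.sum_congr rfl fun k _ => ?_
        simp [mul_assoc]
    _ = ∑ j ∈ ru.index, ∑ i ∈ rx.index, ∑ k ∈ (rx2 i).index,
          Phi (ru.left j) (ru.right j) φ Sinv
            (rx.left i ⊗ₜ[ℂ] ((rx2 i).left k ⊗ₜ[ℂ] (rx2 i).right k)) := by
        refine Finset.sum_congr rfl fun j _ => ?_
        exact (triple_apply _ rx rx1 rx2).symm
    _ = ∑ i ∈ rx.index, ∑ j ∈ ru.index, ∑ k ∈ (rx2 i).index,
          φ (ru.right j * (rx2 i).right k) •
            ((ru.left j * (rx2 i).left k) * Sinv (rx.left i)) := by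
        rw [Finset.sum_comm]
        refine Finset.sum_congr rfl fun i _ => Finset.sum_congr rfl fun j _ =>
          Finset.sum_congr rfl fun k _ => ?_
        simp [mul_assoc]
    _ = ∑ i ∈ rx.index, φ (u * rx.right i) • Sinv (rx.left i) := by
        refine Finset.sum_congr rfl fun i _ => ?_
        have h2 : ∀ j ∈ ru.index, ∀ k ∈ (rx2 i).index, True := fun _ _ _ _ => trivial
        calc ∑ j ∈ ru.index, ∑ k ∈ (rx2 i).index,
              φ (ru.right j * (rx2 i).right k) •
                ((ru.left j * (rx2 i).left k) * Sinv (rx.left i))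
            = (∑ j ∈ ru.index, ∑ k ∈ (rx2 i).index,
                φ (ru.right j * (rx2 i).right k) •
                  (ru.left j * (rx2 i).left k)) * Sinv (rx.left i) := by
              rw [Finset.sum_mul]
              refine Finset.sum_congr rfl fun j _ => ?_
              rw [Finset.sum_mul]
              refine Finset.sum_congr rfl fun k _ => ?_
              rw [smul_mul_assoc]
          _ = (φ (u * rx.right i) • (1 : A)) * Sinv (rx.left i) := by
              rw [← Finset.sum_product']
              exact congrArg (· * Sinv (rx.left i))
                (integral_sum hφ (mulRepr ru (rx2 i)))
          _ = φ (u * rx.right i) • Sinv (rx.left i) := by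
              rw [smul_mul_assoc, one_mul]
end Aux

theorem fourier_transform_intertwines_convolution_and_multiplication
    (Sinv : A →ₗ[ℂ] A)
    (hS₁ : HopfAlgebra.antipode (R := ℂ) (A := A) ∘ₗ Sinv = LinearMap.id)
    (hS₂ : Sinv ∘ₗ HopfAlgebra.antipode (R := ℂ) (A := A) = LinearMap.id)
    (φ : A →ₗ[ℂ] ℂ) (hφ : IsLeftIntegral φ)
    (F : A →ₗ[ℂ] (A →ₗ[ℂ] ℂ)) (hF : ∀ x u : A, F x u = φ (u * x)) :
    ∀ (b : A →ₗ[ℂ] ℂ) (x : A), F (lam Sinv b x) = conv b (F x) := by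
  intro b x
  apply LinearMap.ext
  intro u
  set ru := Coalgebra.Repr.arbitrary ℂ u with hru
  set rx := Coalgebra.Repr.arbitrary ℂ x with hrx
  have hlam : lam Sinv b x = ∑ i ∈ rx.index, b (Sinv (rx.left i)) • rx.right i := by
    simp only [lam, LinearMap.comp_apply, LinearMap.coe_comp, LinearEquiv.coe_coe,
      Function.comp_apply]
    rw [← rx.eq]
    simp [map_sum]
  have hLHS : F (lam Sinv b x) u
      = ∑ i ∈ rx.index, b (Sinv (rx.left i)) * φ (u * rx.right i) := by
    rw [hF, hlam, Finset.mul_sum, map_sum]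
    refine Finset.sum_congr rfl fun i _ => ?_
    rw [mul_smul_comm, map_smul, smul_eq_mul]
  have hRHS : conv b (F x) u = ∑ j ∈ ru.index, b (ru.left j) * φ (ru.right j * x) := by
    simp only [conv, LinearMap.comp_apply, LinearMap.coe_comp, Function.comp_apply]
    rw [← ru.eq]
    simp only [map_sum, TensorProduct.map_tmul, LinearMap.mul'_apply]
    refine Finset.sum_congr rfl fun j _ => ?_
    rw [hF]
  have hk := key_identity Sinv hS₁ hS₂ φ hφ.2 u x ru rx
    (fun i => Coalgebra.Repr.arbitrary ℂ _) (fun i => Coalgebra.Repr.arbitrary ℂ _)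
  have hb := congrArg b hk
  simp only [map_sum, map_smul, smul_eq_mul] at hb
  rw [hLHS, hRHS]
  calc ∑ i ∈ rx.index, b (Sinv (rx.left i)) * φ (u * rx.right i)
      = ∑ i ∈ rx.index, φ (u * rx.right i) * b (Sinv (rx.left i)) :=
        Finset.sum_congr rfl fun i _ => mul_comm _ _
    _ = ∑ j ∈ ru.index, φ (ru.right j * x) * b (ru.left j) := hb.symm
    _ = ∑ j ∈ ru.index, b (ru.left j) * φ (ru.right j * x) :=
        Finset.sum_congr rfl fun j _ => mul_comm _ _
end

section
/- Let A be a Hopf algebra over ℂ with antipode S and let φ be a left integral on A. Then the strong left invariance identity holds: for all u, x ∈ A, Σ x₍₁₎·φ(u·x₍₂₎) = Σ S(u₍₁₎)·φ(u₍₂₎·x); equivalently, (id ⊗ φ)((1 ⊗ u)Δ(x)) = S((id ⊗ φ)(Δ(u)(1 ⊗ x))). -/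
/-!
STATEMENT 14: Let A be a Hopf algebra over ℂ with antipode S and let φ be a left
integral on A.  Then the strong left invariance identity holds: for all u, x ∈ A,
Σ x₍₁₎·φ(u·x₍₂₎) = Σ S(u₍₁₎)·φ(u₍₂₎·x); equivalently,
(id ⊗ φ)((1 ⊗ u)Δ(x)) = S((id ⊗ φ)(Δ(u)(1 ⊗ x))).
-/

open scoped TensorProduct

variable {A : Type*} [Semiring A] [HopfAlgebra ℂ A]

open TensorProduct LinearMap Coalgebra HopfAlgebra in
/-- Left multiplication in the first tensor leg commutes with `(id ⊗ φ)` followed by `rid`. -/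
lemma strong_left_invariance.lTensor_rid_mulLeft (φ : A →ₗ[ℂ] ℂ) (s : A) (t : A ⊗[ℂ] A) :
    TensorProduct.rid ℂ A (φ.lTensor A ((s ⊗ₜ[ℂ] (1 : A)) * t)) =
      s * TensorProduct.rid ℂ A (φ.lTensor A t) := by
  induction t with
  | zero => simp
  | tmul a b => simp [Algebra.TensorProduct.tmul_mul_tmul, mul_smul_comm]
  | add t₁ t₂ h₁ h₂ => simp [mul_add, h₁, h₂]

open TensorProduct LinearMap Coalgebra HopfAlgebra in
/-- Strong left invariance, tensor form. -/
lemma strong_left_invariance.tensor_form (φ : A →ₗ[ℂ] ℂ) (hφ : IsLeftIntegral φ) (u x : A) :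
    TensorProduct.rid ℂ A
        (φ.lTensor A (((1 : A) ⊗ₜ[ℂ] u) * Coalgebra.comul (R := ℂ) x)) =
      HopfAlgebra.antipode (R := ℂ) (A := A)
        (TensorProduct.rid ℂ A
          (φ.lTensor A (Coalgebra.comul (R := ℂ) u * ((1 : A) ⊗ₜ[ℂ] x)))) := by
  set S : A →ₗ[ℂ] A := HopfAlgebra.antipode (R := ℂ) (A := A) with hS
  set Q : A ⊗[ℂ] A →ₗ[ℂ] A :=
    (TensorProduct.rid ℂ A).toLinearMap ∘ₗ φ.lTensor A ∘ₗ
      LinearMap.mulRight ℂ (Coalgebra.comul (R := ℂ) x) with hQ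
  have hQapp : ∀ t, Q t =
      TensorProduct.rid ℂ A (φ.lTensor A (t * Coalgebra.comul (R := ℂ) x)) := by
    intro t; simp [hQ]
  have stepA : ∀ (s : A) (t : A ⊗[ℂ] A), Q ((s ⊗ₜ[ℂ] (1 : A)) * t) = s * Q t := by
    intro s t
    rw [hQapp, hQapp, mul_assoc, strong_left_invariance.lTensor_rid_mulLeft]
  set P : A ⊗[ℂ] (A ⊗[ℂ] A) →ₗ[ℂ] A := LinearMap.mul' ℂ A ∘ₗ TensorProduct.map S Q with hP
  -- map equality for the associativity step
  have hmap : Q ∘ₗ (LinearMap.mul' ℂ A ∘ₗ S.rTensor A).rTensor A =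
      P ∘ₗ (TensorProduct.assoc ℂ A A A).toLinearMap := by
    apply TensorProduct.ext_threefold
    intro p q r
    have : (S p * q) ⊗ₜ[ℂ] r = (S p ⊗ₜ[ℂ] (1 : A)) * (q ⊗ₜ[ℂ] r) := by
      simp [Algebra.TensorProduct.tmul_mul_tmul]
    simp only [LinearMap.comp_apply, rTensor_tmul, LinearEquiv.coe_coe,
      TensorProduct.assoc_tmul, hP, TensorProduct.map_tmul, mul'_apply, this, stepA]
  -- `(S(u₁)u₂) ⊗ [Δ applied to second leg]` collapses via the left integral
  have hC1 : P ∘ₗ (Coalgebra.comul (R := ℂ) (A := A)).lTensor A =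
      S ∘ₗ (TensorProduct.rid ℂ A).toLinearMap ∘ₗ φ.lTensor A ∘ₗ
        LinearMap.mulRight ℂ ((1 : A) ⊗ₜ[ℂ] x) := by
    apply TensorProduct.ext'
    intro a b
    have h1 : Q (Coalgebra.comul (R := ℂ) b) = φ (b * x) • 1 := by
      rw [hQapp, ← Bialgebra.comul_mul, hφ.2]
    simp only [LinearMap.comp_apply, lTensor_tmul, hP, TensorProduct.map_tmul, mul'_apply,
      h1, LinearEquiv.coe_coe, mulRight_apply, Algebra.TensorProduct.tmul_mul_tmul,
      one_mul, rid_tmul, map_smul]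
    rw [mul_smul_comm, mul_one, mul_one]
  -- the antipode axiom: `(mul' ∘ S.rTensor ∘ comul).rTensor (comul u) = 1 ⊗ u`
  have hkey : (LinearMap.mul' ℂ A ∘ₗ S.rTensor A).rTensor A
      ((Coalgebra.comul (R := ℂ) (A := A)).rTensor A (Coalgebra.comul (R := ℂ) u)) =
      (1 : A) ⊗ₜ[ℂ] u := by
    rw [← LinearMap.comp_apply, ← LinearMap.rTensor_comp, LinearMap.comp_assoc,
      hS, HopfAlgebra.mul_antipode_rTensor_comul, LinearMap.rTensor_comp,
      LinearMap.comp_apply, Coalgebra.rTensor_counit_comul, rTensor_tmul]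
    simp
  have lhs_eq : TensorProduct.rid ℂ A
      (φ.lTensor A (((1 : A) ⊗ₜ[ℂ] u) * Coalgebra.comul (R := ℂ) x)) =
      Q ((1 : A) ⊗ₜ[ℂ] u) := (hQapp _).symm
  rw [lhs_eq, ← hkey, ← LinearMap.comp_apply Q, hmap]
  have := Coalgebra.coassoc_apply (R := ℂ) (A := A) u
  simp only [LinearMap.comp_apply, LinearEquiv.coe_coe]
  rw [this, ← LinearMap.comp_apply P, hC1]
  simp [hS]

theorem strong_left_invariance
    (φ : A →ₗ[ℂ] ℂ) (hφ : IsLeftIntegral φ) :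
    -- Sweedler form: `Σ φ(u·x₍₂₎) • x₍₁₎ = Σ φ(u₍₂₎·x) • S(u₍₁₎)`
    (∀ (u x : A) {ιx : Type*} (rx : Coalgebra.Repr ℂ x ιx) {ιu : Type*} (ru : Coalgebra.Repr ℂ u ιu),
      ∑ i ∈ rx.index, φ (u * rx.right i) • rx.left i =
        ∑ j ∈ ru.index,
          φ (ru.right j * x) • HopfAlgebra.antipode (R := ℂ) (A := A) (ru.left j)) ∧
    -- tensor form: `(id ⊗ φ)((1 ⊗ u)Δ(x)) = S((id ⊗ φ)(Δ(u)(1 ⊗ x)))`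
    (∀ u x : A,
      TensorProduct.rid ℂ A
          (φ.lTensor A (((1 : A) ⊗ₜ[ℂ] u) * Coalgebra.comul (R := ℂ) x)) =
        HopfAlgebra.antipode (R := ℂ) (A := A)
          (TensorProduct.rid ℂ A
            (φ.lTensor A (Coalgebra.comul (R := ℂ) u * ((1 : A) ⊗ₜ[ℂ] x))))) := by
  refine ⟨fun u x {_} rx {_} ru => ?_, fun u x => strong_left_invariance.tensor_form φ hφ u x⟩
  have h1 : TensorProduct.rid ℂ A
      (φ.lTensor A (((1 : A) ⊗ₜ[ℂ] u) * Coalgebra.comul (R := ℂ) x)) =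
      ∑ i ∈ rx.index, φ (u * rx.right i) • rx.left i := by
    rw [← rx.eq, Finset.mul_sum]
    simp [Algebra.TensorProduct.tmul_mul_tmul]
  have h2 : TensorProduct.rid ℂ A
      (φ.lTensor A (Coalgebra.comul (R := ℂ) u * ((1 : A) ⊗ₜ[ℂ] x))) =
      ∑ j ∈ ru.index, φ (ru.right j * x) • ru.left j := by
    rw [← ru.eq, Finset.sum_mul]
    simp [Algebra.TensorProduct.tmul_mul_tmul]
  rw [← h1, strong_left_invariance.tensor_form φ hφ u x, h2, map_sum]
  simp
end
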